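/- If Σ_{v=1}^∞ V(μ, h_v)² γ_v² < ∞ for μ ∈ ℋ, then for every t ∈ [0,1], |(W_λ μ)(t)| ≤ λ C_h (Σ_v V(μ, h_v)² γ_v²)^{1/2} (Σ_v (1 + λγ_v)^{-2})^{1/2}; in particular there is a constant C, depending only on m, c₀ and C_h, such that sup_{t∈[0,1]} |(W_λ μ)(t)| ≤ C h^{2m − 1/2} (Σ_v V(μ, h_v)² γ_v²)^{1/2}. -/

import Mathlib

open scoped RealInnerProductSpace
open MeasureTheory

noncomputable section

/-- The RKHS framework of the paper: a real Hilbert space `H` of functions on `[0,1]`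
(with evaluation map `ev`), whose inner product is `⟪f, g⟫ = V f g + lam * J f g` for
symmetric positive-semidefinite bilinear forms `V` and `J`, together with a simultaneously
orthogonal system `hvec` with eigenvalues `γ`, uniformly bounded by `Ch`, in which every
element expands, a reproducing kernel `K`, and the operator `W = W_lam` determined by
`⟪W f, g⟫ = lam * J f g`. -/
structure RKHSContext (lam : ℝ) (H : Type*) [NormedAddCommGroup H] [InnerProductSpace ℝ H] where
  ev : H → ℝ → ℝ
  V : H →ₗ[ℝ] H →ₗ[ℝ] ℝ
  J : H →ₗ[ℝ] H →ₗ[ℝ] ℝ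
  V_symm : ∀ f g : H, V f g = V g f
  J_symm : ∀ f g : H, J f g = J g f
  V_nonneg : ∀ f : H, 0 ≤ V f f
  J_nonneg : ∀ f : H, 0 ≤ J f f
  inner_eq : ∀ f g : H, ⟪f, g⟫ = V f g + lam * J f g
  hvec : ℕ → H
  γ : ℕ → ℝ
  γ_pos : ∀ v, 0 < γ v
  Ch : ℝ
  hvec_bound : ∀ v : ℕ, ∀ t ∈ Set.Icc (0:ℝ) 1, |ev (hvec v) t| ≤ Ch
  V_orth : ∀ u v : ℕ, V (hvec u) (hvec v) = if u = v then 1 else 0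
  J_orth : ∀ u v : ℕ, J (hvec u) (hvec v) = if u = v then γ u else 0
  expansion : ∀ g : H, HasSum (fun v => V g (hvec v) • hvec v) g
  K : ℝ → H
  reproducing : ∀ t ∈ Set.Icc (0:ℝ) 1, ∀ f : H, ⟪K t, f⟫ = ev f t
  W : H →ₗ[ℝ] H
  W_spec : ∀ f g : H, ⟪W f, g⟫ = lam * J f g

/-!
Expanding `W μ` in the system `h_v` gives `V(W μ, h_v) = λγ_v V(μ, h_v) / (1 + λγ_v)`, so through the
reproducing kernel `(W μ)(t) = Σ_v V(W μ, h_v) h_v(t)`, and Cauchy–Schwarz gives the first bound.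
For the second, `γ_v ≥ c₀ (v+1)^{2m}` yields `1 + λγ_v ≥ (1 + h(v+1)) / (2 + c₀⁻¹)`, and
`Σ_v (1 + h(v+1))⁻² ≤ h⁻¹` by telescoping against `1/(h(1 + hv))`; finally `λ h^{-1/2} = h^{2m-1/2}`.
-/

open Finset

theorem tsum_mul_le_sqrt_mul_sqrt {x y : ℕ → ℝ} (hx : ∀ n, 0 ≤ x n) (hy : ∀ n, 0 ≤ y n)
    (hx2 : Summable fun n => x n ^ 2) (hy2 : Summable fun n => y n ^ 2) :
    Summable (fun n => x n * y n) ∧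
      ∑' n, x n * y n ≤ √(∑' n, x n ^ 2) * √(∑' n, y n ^ 2) := by
  simp only [← Real.rpow_two, Real.sqrt_eq_rpow] at hx2 hy2 ⊢
  simpa only [one_div] using
    Real.summable_and_inner_le_Lp_mul_Lq_tsum_of_nonneg .two_two hx hy hx2 hy2

theorem sum_range_inv_one_add_mul_sq_le {h : ℝ} (hh : 0 < h) (N : ℕ) :
    ∑ n ∈ range N, ((1 + h * (n + 1)) ^ 2)⁻¹ ≤ h⁻¹ := by
  set T : ℕ → ℝ := fun n => (h * (1 + h * n))⁻¹
  have telescope (n : ℕ) : ((1 + h * (n + 1)) ^ 2)⁻¹ ≤ T n - T (n + 1) := by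
    have hT : T n - T (n + 1) = ((1 + h * n) * (1 + h * (n + 1)))⁻¹ := by
      simp only [T]; push_cast; field_simp; ring
    rw [hT, sq]
    exact inv_anti₀ (by positivity) (by gcongr; linarith)
  calc ∑ n ∈ range N, ((1 + h * (n + 1)) ^ 2)⁻¹
      ≤ ∑ n ∈ range N, (T n - T (n + 1)) := sum_le_sum fun n _ => telescope n
    _ = T 0 - T N := sum_range_sub' T N
    _ ≤ T 0 := sub_le_self _ (by positivity)
    _ = h⁻¹ := by simp [T]

theorem summable_and_tsum_inv_one_add_mul_sq_le {h : ℝ} (hh : 0 < h) :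
    Summable (fun n : ℕ => ((1 + h * (n + 1)) ^ 2)⁻¹) ∧
      ∑' n : ℕ, ((1 + h * (n + 1)) ^ 2)⁻¹ ≤ h⁻¹ :=
  ⟨summable_of_sum_range_le (fun _ => by positivity) (sum_range_inv_one_add_mul_sq_le hh),
    Real.tsum_le_of_sum_range_le (fun _ => by positivity) (sum_range_inv_one_add_mul_sq_le hh)⟩

theorem one_add_rpow_one_div_mul_le {c₀ p lam γ x : ℝ} (hc₀ : 0 < c₀) (hp : 1 ≤ p)
    (hlam : 0 ≤ lam) (hx : 0 ≤ x) (hγ : c₀ * x ^ p ≤ γ) :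
    1 + lam ^ (1 / p) * x ≤ (2 + c₀⁻¹) * (1 + lam * γ) := by
  set y := lam ^ (1 / p) * x
  have hy : 0 ≤ y := by positivity
  have hyp : y ^ p = lam * x ^ p := by
    rw [Real.mul_rpow (by positivity) hx, one_div, Real.rpow_inv_rpow hlam (by linarith)]
  have hy_le : y ≤ 1 + y ^ p := by
    rcases le_or_gt y 1 with h | h
    · linarith [Real.rpow_nonneg hy p]
    · linarith [Real.self_le_rpow_of_one_le h.le hp]
  have hxp : lam * x ^ p ≤ c₀⁻¹ * (lam * γ) := by
    rw [le_inv_mul_iff₀ hc₀]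
    nlinarith
  have hγ0 : 0 ≤ lam * γ := mul_nonneg hlam (by nlinarith [Real.rpow_nonneg hx p])
  nlinarith [inv_pos.2 hc₀]

theorem summable_and_tsum_inv_one_add_mul_sq_le_of_rpow_le {c₀ p lam : ℝ} {γ : ℕ → ℝ}
    (hc₀ : 0 < c₀) (hp : 1 ≤ p) (hlam : 0 < lam) (hγ : ∀ v : ℕ, c₀ * ((v : ℝ) + 1) ^ p ≤ γ v) :
    Summable (fun v => ((1 + lam * γ v) ^ 2)⁻¹) ∧
      ∑' v, ((1 + lam * γ v) ^ 2)⁻¹ ≤ (2 + c₀⁻¹) ^ 2 * (lam ^ (1 / p))⁻¹ := by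
  set h := lam ^ (1 / p)
  obtain ⟨hsum, hle⟩ := summable_and_tsum_inv_one_add_mul_sq_le (show 0 < h by positivity)
  have hterm (v : ℕ) :
      ((1 + lam * γ v) ^ 2)⁻¹ ≤ (2 + c₀⁻¹) ^ 2 * ((1 + h * (v + 1)) ^ 2)⁻¹ := by
    calc ((1 + lam * γ v) ^ 2)⁻¹ = (2 + c₀⁻¹) ^ 2 * (((2 + c₀⁻¹) * (1 + lam * γ v)) ^ 2)⁻¹ := by
          field_simp
      _ ≤ (2 + c₀⁻¹) ^ 2 * ((1 + h * (v + 1)) ^ 2)⁻¹ := by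
          gcongr
          exact one_add_rpow_one_div_mul_le hc₀ hp hlam.le (by positivity) (hγ v)
  have hsum' := hsum.mul_left ((2 + c₀⁻¹) ^ 2)
  have hsummable : Summable fun v => ((1 + lam * γ v) ^ 2)⁻¹ :=
    .of_nonneg_of_le (fun _ => by positivity) hterm hsum'
  refine ⟨hsummable, ?_⟩
  calc ∑' v, ((1 + lam * γ v) ^ 2)⁻¹
      ≤ ∑' v : ℕ, (2 + c₀⁻¹) ^ 2 * ((1 + h * (v + 1)) ^ 2)⁻¹ :=
        hsummable.tsum_le_tsum hterm hsum'
    _ ≤ (2 + c₀⁻¹) ^ 2 * h⁻¹ := by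
        rw [tsum_mul_left]
        gcongr

namespace RKHSContext

variable {lam : ℝ} {H : Type*} [NormedAddCommGroup H] [InnerProductSpace ℝ H]
  (ctx : RKHSContext lam H)

theorem hasSum_inner (f g : H) :
    HasSum (fun u => ctx.V g (ctx.hvec u) * ⟪f, ctx.hvec u⟫) ⟪f, g⟫ := by
  simpa only [innerSL_apply_apply, real_inner_smul_right] using
    (ctx.expansion g).mapL (innerSL ℝ f)

theorem hasSum_ev {t : ℝ} (ht : t ∈ Set.Icc (0 : ℝ) 1) (g : H) :
    HasSum (fun v => ctx.V g (ctx.hvec v) * ctx.ev (ctx.hvec v) t) (ctx.ev g t) := by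
  simpa only [ctx.reproducing t ht] using ctx.hasSum_inner (ctx.K t) g

/- `J` is not assumed continuous, but `g ↦ λ J(g, h_v) = ⟪W h_v, g⟫` is, so it can be evaluated
on the expansion of `g`. -/
theorem lam_mul_J_hvec (g : H) (v : ℕ) :
    lam * ctx.J g (ctx.hvec v) = lam * ctx.γ v * ctx.V g (ctx.hvec v) := by
  have h := ctx.hasSum_inner (ctx.W (ctx.hvec v)) g
  simp only [ctx.W_spec, ctx.J_symm (ctx.hvec v) g] at h
  rw [h.unique (hasSum_single v fun u hu => by simp [ctx.J_orth, Ne.symm hu]), ctx.J_orth,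
    if_pos rfl]
  ring

theorem inner_hvec (g : H) (v : ℕ) :
    ⟪g, ctx.hvec v⟫ = ctx.V g (ctx.hvec v) * (1 + lam * ctx.γ v) := by
  rw [ctx.inner_eq, ctx.lam_mul_J_hvec]
  ring

theorem V_W_hvec_mul (g : H) (v : ℕ) :
    ctx.V (ctx.W g) (ctx.hvec v) * (1 + lam * ctx.γ v) = lam * ctx.γ v * ctx.V g (ctx.hvec v) := by
  rw [← inner_hvec, W_spec, lam_mul_J_hvec]

theorem abs_ev_W_le (hlam : 0 ≤ lam) {t : ℝ} (ht : t ∈ Set.Icc (0 : ℝ) 1) (mu : H)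
    (hmu : Summable fun v => ctx.V mu (ctx.hvec v) ^ 2 * ctx.γ v ^ 2)
    (hγ : Summable fun v => ((1 + lam * ctx.γ v) ^ 2)⁻¹) :
    |ctx.ev (ctx.W mu) t| ≤ lam * ctx.Ch * √(∑' v, ctx.V mu (ctx.hvec v) ^ 2 * ctx.γ v ^ 2)
      * √(∑' v, ((1 + lam * ctx.γ v) ^ 2)⁻¹) := by
  set x : ℕ → ℝ := fun v => |ctx.V mu (ctx.hvec v)| * ctx.γ v
  set y : ℕ → ℝ := fun v => (1 + lam * ctx.γ v)⁻¹
  have hP (v : ℕ) : 0 < 1 + lam * ctx.γ v := by nlinarith [ctx.γ_pos v]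
  have hx (v : ℕ) : 0 ≤ x v := mul_nonneg (abs_nonneg _) (ctx.γ_pos v).le
  have hy (v : ℕ) : 0 ≤ y v := (inv_pos.2 (hP v)).le
  have hx2 : (fun v => x v ^ 2) = fun v => ctx.V mu (ctx.hvec v) ^ 2 * ctx.γ v ^ 2 := by
    simp only [x, mul_pow, sq_abs]
  have hy2 : (fun v => y v ^ 2) = fun v => ((1 + lam * ctx.γ v) ^ 2)⁻¹ := by
    simp only [y, inv_pow]
  obtain ⟨hxy, hxy_le⟩ := tsum_mul_le_sqrt_mul_sqrt hx hy (hx2 ▸ hmu) (hy2 ▸ hγ)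
  have hterm (v : ℕ) : ‖ctx.V (ctx.W mu) (ctx.hvec v) * ctx.ev (ctx.hvec v) t‖
      ≤ lam * ctx.Ch * (x v * y v) := by
    have hcoeff : ctx.V (ctx.W mu) (ctx.hvec v) = lam * ctx.γ v * ctx.V mu (ctx.hvec v) * y v :=
      (eq_div_of_mul_eq (hP v).ne' (ctx.V_W_hvec_mul mu v)).trans (div_eq_mul_inv _ _)
    rw [Real.norm_eq_abs, abs_mul, hcoeff, abs_mul, abs_mul, abs_mul, abs_of_nonneg hlam,
      abs_of_pos (ctx.γ_pos v), abs_of_nonneg (hy v)]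
    calc lam * ctx.γ v * |ctx.V mu (ctx.hvec v)| * y v * |ctx.ev (ctx.hvec v) t|
        ≤ lam * ctx.γ v * |ctx.V mu (ctx.hvec v)| * y v * ctx.Ch := by
          gcongr
          · exact mul_nonneg (mul_nonneg (mul_nonneg hlam (ctx.γ_pos v).le) (abs_nonneg _)) (hy v)
          · exact ctx.hvec_bound v t ht
      _ = lam * ctx.Ch * (x v * y v) := by ring
  calc |ctx.ev (ctx.W mu) t|
      ≤ lam * ctx.Ch * ∑' v, x v * y v :=
        (ctx.hasSum_ev ht (ctx.W mu)).norm_le_of_bounded (hxy.hasSum.mul_left _) hterm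
    _ ≤ lam * ctx.Ch * (√(∑' v, x v ^ 2) * √(∑' v, y v ^ 2)) := by
        have hCh : 0 ≤ ctx.Ch := (abs_nonneg _).trans (ctx.hvec_bound 0 t ht)
        gcongr
    _ = _ := by rw [hx2, hy2, ← mul_assoc]

end RKHSContext

theorem rpow_one_div_rpow_sub_half {lam p : ℝ} (hlam : 0 < lam) (hp : p ≠ 0) :
    (lam ^ (1 / p)) ^ (p - 1 / 2) = lam * (√(lam ^ (1 / p)))⁻¹ := by
  rw [Real.rpow_sub (by positivity), ← Real.rpow_mul hlam.le, one_div_mul_cancel hp,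
    Real.rpow_one, Real.sqrt_eq_rpow, div_eq_mul_inv]

/-- If `Σ_v V(μ, h_v)² γ_v² < ∞` then for every `t ∈ [0,1]`,
`|(W_λ μ)(t)| ≤ λ C_h (Σ_v V(μ,h_v)² γ_v²)^{1/2} (Σ_v (1+λγ_v)^{-2})^{1/2}`; in particular
there is a constant `C`, depending only on `m`, `c₀` and `C_h`, such that
`sup_t |(W_λ μ)(t)| ≤ C h^{2m−1/2} (Σ_v V(μ,h_v)² γ_v²)^{1/2}`. -/
theorem W_mu_pointwise_bound (m c₀ Ch : ℝ) (hm : 1/2 < m) (hc₀ : 0 < c₀) :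
    ∃ C : ℝ, 0 < C ∧
      ∀ (lam : ℝ), 0 < lam →
        ∀ (H : Type) [NormedAddCommGroup H] [InnerProductSpace ℝ H]
          (ctx : RKHSContext lam H),
          ctx.Ch = Ch →
          (∀ v : ℕ, c₀ * ((v : ℝ) + 1) ^ (2 * m) ≤ ctx.γ v) →
          ∀ mu : H,
            Summable (fun v : ℕ => (ctx.V mu (ctx.hvec v))^2 * (ctx.γ v)^2) →
            ∀ t ∈ Set.Icc (0:ℝ) 1,
              |ctx.ev (ctx.W mu) t| ≤
                  lam * Ch * Real.sqrt (∑' v : ℕ, (ctx.V mu (ctx.hvec v))^2 * (ctx.γ v)^2)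
                    * Real.sqrt (∑' v : ℕ, ((1 + lam * ctx.γ v)^2)⁻¹) ∧
              |ctx.ev (ctx.W mu) t| ≤
                  C * (lam ^ (1/(2*m))) ^ (2*m - 1/2 : ℝ)
                    * Real.sqrt (∑' v : ℕ, (ctx.V mu (ctx.hvec v))^2 * (ctx.γ v)^2) := by
  refine ⟨(|Ch| + 1) * (2 + c₀⁻¹), by positivity, ?_⟩
  rintro lam hlam H _ _ ctx rfl hγ mu hmu t ht
  obtain ⟨hsum, hsum_le⟩ :=
    summable_and_tsum_inv_one_add_mul_sq_le_of_rpow_le hc₀ (by linarith) hlam hγ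
  have hbound := ctx.abs_ev_W_le hlam.le ht mu hmu hsum
  refine ⟨hbound, hbound.trans ?_⟩
  set h := lam ^ (1 / (2 * m))
  have hsqrt : √(∑' v, ((1 + lam * ctx.γ v) ^ 2)⁻¹) ≤ (2 + c₀⁻¹) * (√h)⁻¹ := by
    calc _ ≤ √((2 + c₀⁻¹) ^ 2 * h⁻¹) := Real.sqrt_le_sqrt hsum_le
      _ = _ := by rw [Real.sqrt_mul (by positivity), Real.sqrt_sq (by positivity), Real.sqrt_inv]
  rw [rpow_one_div_rpow_sub_half hlam (by linarith)]
  calc _ ≤ lam * (|ctx.Ch| + 1) * √(∑' v, ctx.V mu (ctx.hvec v) ^ 2 * ctx.γ v ^ 2)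
        * ((2 + c₀⁻¹) * (√h)⁻¹) := by
        gcongr
        linarith [le_abs_self ctx.Ch]
    _ = _ := by ring
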